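/- arXiv:0906.4332 — 4 statements merged into one kernel-verified Lean document; each statement's English description precedes it below -/
import Mathlib

section
/- If Upd is a family of update functions on measure spaces satisfying P1 (every measure in Upd(X,B) assigns probability 1 to B) and P2 (representation independence under measurable surjections), and if for some probability measure Pr on a measure space M, some event B, and some event A with 0 < Pr(A|B) < 1, there exists Pr' in Upd(Pr,B) with Pr'(A) < Pr(A|B), then there also exists Pr'' in Upd(Pr,B) with Pr''(A) > Pr(A|B). -/
open MeasureTheory ProbabilityTheory Set
open scoped Classical NNReal ENNReal

noncomputable section

/-- A family of update functions, one for each measure space. -/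
abbrev UpdFamily : Type 1 :=
  ∀ (W : Type) [MeasurableSpace W],
    Set (ProbabilityMeasure W) → Set W → Set (ProbabilityMeasure W)

/-- Base condition: `Upd(X,B) = ∅` whenever every measure in `X` gives `B` probability 0. -/
def UpdBase (U : UpdFamily) : Prop :=
  ∀ (W : Type) [MeasurableSpace W] (X : Set (ProbabilityMeasure W)) (B : Set W),
    (∀ μ ∈ X, μ B = 0) → U W X B = ∅

/-- The conditional probability `Pr(A|B) = Pr(A ∩ B)/Pr(B)`. -/
def condProb {W : Type} [MeasurableSpace W] (μ : ProbabilityMeasure W) (A B : Set W) : ℝ≥0 :=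
  μ (A ∩ B) / μ B

/-- The conditional probability measure `Pr(·|B)` (defined when `Pr(B) > 0`). -/
def condPM {W : Type} [MeasurableSpace W] (μ : ProbabilityMeasure W) (B : Set W) :
    ProbabilityMeasure W :=
  if h : (μ : Measure W) B ≠ 0 then
    ⟨(μ : Measure W)[|B], cond_isProbabilityMeasure h⟩
  else μ

/-- Pushforward of a probability measure along a measurable map (`f*`). -/
def pushPM {W W' : Type} [MeasurableSpace W] [MeasurableSpace W']
    {f : W → W'} (hf : Measurable f) (μ : ProbabilityMeasure W) : ProbabilityMeasure W' :=
  μ.map hf.aemeasurable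

/-- P1: every measure in `Upd(X,B)` assigns probability 1 to `B`. -/
def P1 (U : UpdFamily) : Prop :=
  ∀ (W : Type) [MeasurableSpace W] (X : Set (ProbabilityMeasure W)) (B : Set W),
    MeasurableSet B → ∀ μ ∈ U W X B, μ B = 1

/-- P2: representation independence under measurable surjections. -/
def P2 (U : UpdFamily) : Prop :=
  ∀ (W W' : Type) [MeasurableSpace W] [MeasurableSpace W'] (f : W → W')
    (hf : Measurable f), Function.Surjective f →
    ∀ (X : Set (ProbabilityMeasure W)) (B : Set W'), MeasurableSet B →
      U W' (pushPM hf '' X) B = pushPM hf '' (U W X (f ⁻¹' B))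

/-- P3: compositionality of updating. -/
def P3 (U : UpdFamily) : Prop :=
  ∀ (W : Type) [MeasurableSpace W] (X : Set (ProbabilityMeasure W)) (B C : Set W),
    MeasurableSet B → MeasurableSet C → U W (U W X B) C = U W X (B ∩ C)

/-- P4: trivial update on sure evidence. -/
def P4 (U : UpdFamily) : Prop :=
  ∀ (W : Type) [MeasurableSpace W] (X : Set (ProbabilityMeasure W)) (B : Set W),
    MeasurableSet B → (∀ μ ∈ X, μ B = 1) → U W X B = X

/-- P5: pointwise union decomposition. -/
def P5 (U : UpdFamily) : Prop :=
  ∀ (W : Type) [MeasurableSpace W] (X : Set (ProbabilityMeasure W)) (B : Set W),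
    MeasurableSet B → U W X B = ⋃ μ ∈ X, U W {μ} B

/-- P6': singleton inputs yield at most one output measure. -/
def P6' (U : UpdFamily) : Prop :=
  ∀ (W : Type) [MeasurableSpace W] (μ : ProbabilityMeasure W) (B : Set W),
    MeasurableSet B → (U W {μ} B).Subsingleton

/-- P6'': bounded amplification relative to conditioning. -/
def P6'' (U : UpdFamily) : Prop :=
  ∀ (W : Type) [MeasurableSpace W] (μ : ProbabilityMeasure W), ∃ c : ℝ≥0,
    ∀ (A B : Set W), MeasurableSet A → MeasurableSet B →
      ∀ ν ∈ U W {μ} B, ν A ≤ c * condProb μ A B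

/-- P6: either P6' or P6'' holds. -/
def P6 (U : UpdFamily) : Prop := P6' U ∨ P6'' U

/-- P7: some non-sure evidence yields a nonempty update. -/
def P7 (U : UpdFamily) : Prop :=
  ∃ (W : Type) (_ : MeasurableSpace W) (X : Set (ProbabilityMeasure W)) (B : Set W),
    MeasurableSet B ∧ (∀ μ ∈ X, μ B ≠ 1) ∧ U W X B ≠ ∅

/-- Conditioning: `Upd_cond(X,B) = {Pr(·|B) : Pr ∈ X, Pr(B) > 0}`. -/
def updCond {W : Type} [MeasurableSpace W] (X : Set (ProbabilityMeasure W)) (B : Set W) :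
    Set (ProbabilityMeasure W) :=
  {ν | ∃ μ ∈ X, 0 < μ B ∧ ν = condPM μ B}

/-- Constraining: `Upd_constrain(X,B) = {Pr ∈ X : Pr(B) = 1}`. -/
def updConstrain {W : Type} [MeasurableSpace W] (X : Set (ProbabilityMeasure W)) (B : Set W) :
    Set (ProbabilityMeasure W) := {μ ∈ X | μ B = 1}

end

/-!
Let `p = Pr(A|B)`. By P2, the set of posterior values `ν(A)`, `ν ∈ Upd(Pr, B)`, only depends on
the image of `Pr` under the collapse of `W` onto the cells `A ∩ B`, `B \ A`, `Bᶜ` (by P1,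
`ν(A) = ν(A ∩ B)`). The same image arises on `ℝ` from the uniform law `Λ` on `(0, 1/Pr(B)]`,
with `(0, 1]` in the role of `B` and, for any `c`, the periodic arc `{x | fract (x + c) < p}` in
the role of `A`. So `Pr'` yields a posterior `ρ` of `Λ` giving mass `< p` to the arc at `c = 0`.
By Fubini the arcs have average mass exactly `p` over `c ∈ (0, 1]`, while for small `c > 0` they
have barely more mass than the arc at `0`; hence some arc has mass `> p`, and carrying `ρ` back
through the collapse gives `Pr''`. If `B = W` the cell `Bᶜ` is empty, and one collapses onto
`A`, `Aᶜ` instead.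
-/

section Arcs

def periodicArc (p c : ℝ) : Set ℝ := {x | Int.fract (x + c) < p}

lemma measurableSet_periodicArc (p c : ℝ) : MeasurableSet (periodicArc p c) :=
  measurableSet_lt (measurable_id.add_const c).fract measurable_const

lemma mem_periodicArc_comm {p c x : ℝ} : x ∈ periodicArc p c ↔ c ∈ periodicArc p x := by
  simp only [periodicArc, mem_ofPred_eq, add_comm]

lemma periodicArc_zero_inter_Ico {p : ℝ} (hp : p ≤ 1) : periodicArc p 0 ∩ Ico 0 1 = Ico 0 p := by
  ext x
  simp only [periodicArc, add_zero, mem_inter_iff, mem_ofPred_eq, mem_Ico]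
  constructor
  · rintro ⟨hx, hx0, hx1⟩
    rw [Int.fract_eq_self.2 ⟨hx0, hx1⟩] at hx
    exact ⟨hx0, hx⟩
  · rintro ⟨hx0, hxp⟩
    have hx1 : x < 1 := hxp.trans_le hp
    rw [Int.fract_eq_self.2 ⟨hx0, hx1⟩]
    exact ⟨hxp, hx0, hx1⟩

lemma volume_periodicArc_inter_Ioc {p : ℝ} (hp : p ≤ 1) (c : ℝ) :
    volume (periodicArc p c ∩ Ioc 0 1) = ENNReal.ofReal p := by
  have hperiodic : ∀ g : AddSubgroup.zmultiples (1 : ℝ),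
      (fun x => g +ᵥ x) ⁻¹' periodicArc p 0 = periodicArc p 0 := by
    rintro ⟨_, n, rfl⟩
    ext x
    simp [periodicArc, AddSubgroup.vadd_def]
  have htranslate :
      periodicArc p c ∩ Ioc 0 1 = (· + c) ⁻¹' (periodicArc p 0 ∩ Ioc c (c + 1)) := by
    ext x
    simp [periodicArc, add_comm c 1]
  calc volume (periodicArc p c ∩ Ioc 0 1)
      = volume (periodicArc p 0 ∩ Ioc c (c + 1)) := by
        rw [htranslate, measure_preimage_add_right]
    _ = volume (periodicArc p 0 ∩ Ioc 0 (0 + 1)) :=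
        (isAddFundamentalDomain_Ioc one_pos c).measure_set_eq
          (isAddFundamentalDomain_Ioc one_pos 0) (measurableSet_periodicArc p 0) hperiodic
    _ = volume (periodicArc p 0 ∩ Ico 0 1) := by
        rw [zero_add]
        exact measure_congr ((ae_eq_refl _).inter Ico_ae_eq_Ioc.symm)
    _ = ENNReal.ofReal p := by
        rw [periodicArc_zero_inter_Ico hp, Real.volume_Ico, sub_zero]

theorem lintegral_measure_periodicArc (ρ : Measure ℝ) [SFinite ρ] {p : ℝ} (hp : p ≤ 1) :
    ∫⁻ c in Ioc 0 1, ρ (periodicArc p c) = ENNReal.ofReal p * ρ univ := by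
  have hmeas : Measurable (Function.uncurry fun c x => (periodicArc p x).indicator 1 c :
      ℝ × ℝ → ℝ≥0∞) :=
    measurable_one.indicator
      (measurableSet_lt (measurable_fst.add measurable_snd).fract measurable_const)
  have hswap : ∀ c, ρ (periodicArc p c) = ∫⁻ x, (periodicArc p x).indicator 1 c ∂ρ := fun c => by
    rw [← lintegral_indicator_one (measurableSet_periodicArc p c)]
    congr 1 with x
    simp only [indicator_apply, mem_periodicArc_comm (c := c), Pi.one_apply]
  calc ∫⁻ c in Ioc 0 1, ρ (periodicArc p c)
      = ∫⁻ x, (∫⁻ c in Ioc 0 1, (periodicArc p x).indicator 1 c) ∂ρ := by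
        simp only [hswap]
        exact lintegral_lintegral_swap hmeas.aemeasurable
    _ = ENNReal.ofReal p * ρ univ := by
        simp only [lintegral_indicator_one (measurableSet_periodicArc _ _),
          Measure.restrict_apply (measurableSet_periodicArc _ _),
          volume_periodicArc_inter_Ioc hp, lintegral_const]

lemma periodicArc_subset_union {p t : ℝ} (ht : 0 ≤ t) :
    periodicArc p t ⊆ periodicArc p 0 ∪ {x | 1 - t ≤ Int.fract x} := by
  intro x hx
  by_cases h : 1 - t ≤ Int.fract x
  · exact Or.inr h
  · have hfract : Int.fract (x + t) = Int.fract x + t :=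
      Int.fract_eq_iff.2 ⟨by linarith [Int.fract_nonneg x], by linarith, ⌊x⌋, by
        rw [← Int.self_sub_fract x]; ring⟩
    have hx : Int.fract (x + t) < p := hx
    left
    show Int.fract (x + 0) < p
    rw [add_zero]
    linarith

lemma exists_measure_one_sub_le_fract_lt (ρ : Measure ℝ) [IsFiniteMeasure ρ] {ε : ℝ≥0∞}
    (hε : 0 < ε) : ∃ t ∈ Ioo (0 : ℝ) 1, ρ {x | 1 - t ≤ Int.fract x} < ε := by
  have hlim := tendsto_measure_biInter_gt (μ := ρ) (a := (0 : ℝ))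
    (s := fun t => {x : ℝ | 1 - t ≤ Int.fract x})
    (fun _ _ => (measurableSet_le measurable_const measurable_fract).nullMeasurableSet)
    (fun _ _ _ hij _ hx => by simp only [mem_ofPred_eq] at hx ⊢; linarith)
    ⟨1, one_pos, measure_ne_top _ _⟩
  have hempty : ⋂ t > (0 : ℝ), {x : ℝ | 1 - t ≤ Int.fract x} = ∅ := by
    refine eq_empty_of_forall_notMem fun x hx => ?_
    have := mem_iInter₂.1 hx ((1 - Int.fract x) / 2) (by linarith [Int.fract_lt_one x])
    simp only [mem_ofPred_eq] at this
    linarith [Int.fract_lt_one x]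
  rw [hempty, measure_empty] at hlim
  obtain ⟨t, htε, ht⟩ := ((hlim.eventually (gt_mem_nhds hε)).and (Ioo_mem_nhdsGT one_pos)).exists
  exact ⟨t, ht, htε⟩

lemma measure_periodicArc_le_add (ρ : Measure ℝ) {p c t : ℝ} (hc : c ∈ Ioc 0 t) :
    ρ (periodicArc p c) ≤ ρ (periodicArc p 0) + ρ {x | 1 - t ≤ Int.fract x} :=
  calc ρ (periodicArc p c)
      ≤ ρ (periodicArc p 0) + ρ {x | 1 - c ≤ Int.fract x} :=
        (measure_mono (periodicArc_subset_union hc.1.le)).trans (measure_union_le _ _)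
    _ ≤ ρ (periodicArc p 0) + ρ {x | 1 - t ≤ Int.fract x} := by
        gcongr
        exact hc.2

theorem exists_lt_measure_periodicArc (ρ : Measure ℝ) [IsFiniteMeasure ρ] {p : ℝ} (hp : p ≤ 1)
    (h : ρ (periodicArc p 0) < ENNReal.ofReal p * ρ univ) :
    ∃ c, ENNReal.ofReal p * ρ univ < ρ (periodicArc p c) := by
  set m := ENNReal.ofReal p * ρ univ
  by_contra! hle
  obtain ⟨r, hr, hrm⟩ := exists_between h
  obtain ⟨t, ⟨ht0, ht1⟩, ht⟩ := exists_measure_one_sub_le_fract_lt ρ (tsub_pos_of_lt hr)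
  have hnear : ∀ c ∈ Ioc 0 t, ρ (periodicArc p c) ≤ r := fun c hc =>
    (measure_periodicArc_le_add ρ hc).trans (lt_tsub_iff_left.1 ht).le
  -- The arcs with `c ∈ (0, t]` fall short of `m` by `m - r`, yet average `m` over `c ∈ (0, 1]`.
  have hbound : ∀ c ∈ Ioc (0 : ℝ) 1,
      ρ (periodicArc p c) + (Ioc 0 t).indicator (fun _ => m - r) c ≤ m := by
    intro c _
    by_cases hc : c ∈ Ioc 0 t
    · rw [indicator_of_mem hc]
      calc ρ (periodicArc p c) + (m - r) ≤ r + (m - r) := by gcongr; exact hnear c hc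
        _ = m := add_tsub_cancel_of_le hrm.le
    · rw [indicator_of_notMem hc, add_zero]
      exact hle c
  have hm : m ≠ ⊤ := ENNReal.mul_ne_top ENNReal.ofReal_ne_top (measure_ne_top ρ univ)
  have hint : m + (m - r) * ENNReal.ofReal t ≤ m := by
    have := setLIntegral_mono (μ := volume) measurable_const hbound
    rw [lintegral_add_right _ (measurable_const.indicator measurableSet_Ioc),
      lintegral_measure_periodicArc ρ hp, lintegral_indicator_const measurableSet_Ioc,
      Measure.restrict_apply measurableSet_Ioc, inter_eq_left.2 (Ioc_subset_Ioc_right ht1.le),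
      setLIntegral_const, Real.volume_Ioc, Real.volume_Ioc, sub_zero, sub_zero,
      ENNReal.ofReal_one, mul_one] at this
    exact this
  have hpos : (m - r) * ENNReal.ofReal t ≠ 0 :=
    mul_ne_zero (tsub_pos_of_lt hrm).ne' (ENNReal.ofReal_pos.2 ht0).ne'
  exact hpos <| nonpos_iff_eq_zero.1 <|
    (ENNReal.add_le_add_iff_left hm).1 (hint.trans (add_zero m).ge)

lemma MeasureTheory.ProbabilityMeasure.exists_lt_apply_periodicArc (ρ : ProbabilityMeasure ℝ)
    {p : ℝ≥0} (hp : p ≤ 1) (h : ρ (periodicArc p 0) < p) : ∃ c, p < ρ (periodicArc p c) := by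
  simp only [← ENNReal.coe_lt_coe, ProbabilityMeasure.ennreal_coeFn_eq_coeFn_toMeasure] at h ⊢
  simpa only [measure_univ, mul_one, ENNReal.ofReal_coe_nnreal] using
    exists_lt_measure_periodicArc (ρ : Measure ℝ) (p := p) (by exact_mod_cast hp)
      (by simpa only [measure_univ, mul_one, ENNReal.ofReal_coe_nnreal] using h)

end Arcs

section ProbabilityFacts

variable {W : Type} [MeasurableSpace W] {Pr : ProbabilityMeasure W} {A B : Set W}

lemma MeasureTheory.ProbabilityMeasure.apply_inter_of_apply_eq_one (hB : MeasurableSet B)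
    (h : Pr B = 1) (A : Set W) : Pr (A ∩ B) = Pr A := by
  rw [← ENNReal.coe_inj, ProbabilityMeasure.ennreal_coeFn_eq_coeFn_toMeasure,
    ProbabilityMeasure.ennreal_coeFn_eq_coeFn_toMeasure]
  refine measure_inter_conull ?_
  rw [prob_compl_eq_one_sub hB, ← ProbabilityMeasure.ennreal_coeFn_eq_coeFn_toMeasure, h,
    ENNReal.coe_one, tsub_self]

lemma MeasureTheory.ProbabilityMeasure.nonempty_of_apply_ne_zero (h : Pr A ≠ 0) : A.Nonempty :=
  nonempty_of_measure_ne_zero (μ := (Pr : Measure W)) (by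
    rwa [← ProbabilityMeasure.ennreal_coeFn_eq_coeFn_toMeasure, ENNReal.coe_ne_zero])

lemma MeasureTheory.ProbabilityMeasure.apply_diff_ne_zero_of_lt (h : Pr (A ∩ B) < Pr B) :
    Pr (B \ A) ≠ 0 := by
  intro h0
  have : (Pr : Measure W) (B ∩ A) = (Pr : Measure W) B := measure_inter_conull' (by
    rw [← ProbabilityMeasure.ennreal_coeFn_eq_coeFn_toMeasure, h0, ENNReal.coe_zero])
  rw [inter_comm, ← ProbabilityMeasure.ennreal_coeFn_eq_coeFn_toMeasure,
    ← ProbabilityMeasure.ennreal_coeFn_eq_coeFn_toMeasure, ENNReal.coe_inj] at this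
  exact h.ne this

lemma condProb_univ (Pr : ProbabilityMeasure W) (A : Set W) : condProb Pr A univ = Pr A := by
  simp [condProb]

lemma apply_inter_pos_and_lt_of_condProb (hpos : 0 < condProb Pr A B)
    (hlt1 : condProb Pr A B < 1) : 0 < Pr (A ∩ B) ∧ Pr (A ∩ B) < Pr B := by
  have hB : 0 < Pr B := pos_of_ne_zero fun h => by simp [condProb, h] at hpos
  exact ⟨pos_of_ne_zero fun h => by simp [condProb, h] at hpos, (div_lt_one hB).1 hlt1⟩

end ProbabilityFacts

noncomputable def uniformIoc (L : ℝ≥0) (hL : L ≠ 0) : ProbabilityMeasure ℝ :=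
  ⟨volume[|Ioc 0 (L : ℝ)], cond_isProbabilityMeasure_of_finite (by simpa using hL) (by simp)⟩

lemma uniformIoc_apply {L : ℝ≥0} (hL : L ≠ 0) (S : Set ℝ) :
    (uniformIoc L hL : Measure ℝ) S = (L : ℝ≥0∞)⁻¹ * volume (Ioc 0 (L : ℝ) ∩ S) := by
  rw [uniformIoc, ProbabilityMeasure.coe_mk, cond_apply measurableSet_Ioc, Real.volume_Ioc,
    sub_zero, ENNReal.ofReal_coe_nnreal]

lemma uniformIoc_apply_inter_Ioc_one {L : ℝ≥0} (hL : L ≠ 0) (h1 : 1 ≤ L) (S : Set ℝ) :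
    (uniformIoc L hL : Measure ℝ) (S ∩ Ioc 0 1) = (L : ℝ≥0∞)⁻¹ * volume (S ∩ Ioc 0 1) := by
  rw [uniformIoc_apply, inter_comm S, ← inter_assoc,
    inter_eq_right.2 (Ioc_subset_Ioc_right (by exact_mod_cast h1))]

section Cells

variable {α : Type*} {A B : Set α}

noncomputable def cellIndex (B A : Set α) (x : α) : Fin 3 :=
  if x ∈ B then if x ∈ A then 0 else 1 else 2

lemma cellIndex_preimage_zero : cellIndex B A ⁻¹' {0} = A ∩ B := by
  ext x; by_cases hB : x ∈ B <;> by_cases hA : x ∈ A <;> simp [cellIndex, hA, hB]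

lemma cellIndex_preimage_one : cellIndex B A ⁻¹' {1} = B \ A := by
  ext x; by_cases hB : x ∈ B <;> by_cases hA : x ∈ A <;> simp [cellIndex, hA, hB]

lemma cellIndex_preimage_two : cellIndex B A ⁻¹' {2} = Bᶜ := by
  ext x; by_cases hB : x ∈ B <;> by_cases hA : x ∈ A <;> simp [cellIndex, hA, hB]

lemma cellIndex_preimage_compl_two : cellIndex B A ⁻¹' {2}ᶜ = B := by
  rw [preimage_compl, cellIndex_preimage_two, compl_compl]

lemma cellIndex_surjective (h0 : (A ∩ B).Nonempty) (h1 : (B \ A).Nonempty) (h2 : Bᶜ.Nonempty) :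
    Function.Surjective (cellIndex B A) := by
  refine fun i => preimage_singleton_nonempty.1 ?_
  match i with
  | 0 => rwa [cellIndex_preimage_zero]
  | 1 => rwa [cellIndex_preimage_one]
  | 2 => rwa [cellIndex_preimage_two]

lemma boolIndicator_surjective (h : A.Nonempty) (h' : Aᶜ.Nonempty) :
    Function.Surjective A.boolIndicator := by
  refine fun i => preimage_singleton_nonempty.1 ?_
  cases i
  · rwa [preimage_boolIndicator_false]
  · rwa [preimage_boolIndicator_true]

variable [MeasurableSpace α]

lemma measurable_cellIndex (hB : MeasurableSet B) (hA : MeasurableSet A) :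
    Measurable (cellIndex B A) :=
  Measurable.ite hB (Measurable.ite hA measurable_const measurable_const) measurable_const

lemma measurable_boolIndicator (hA : MeasurableSet A) : Measurable A.boolIndicator :=
  Measurable.ite hA measurable_const measurable_const

end Cells

section Updates

variable {W T V : Type} [MeasurableSpace W] [MeasurableSpace T] [MeasurableSpace V]

lemma pushPM_apply {f : W → V} (hf : Measurable f) (μ : ProbabilityMeasure W) {s : Set V}
    (hs : MeasurableSet s) : pushPM hf μ s = μ (f ⁻¹' s) :=
  μ.map_apply hf.aemeasurable hs

lemma toMeasure_pushPM_apply {f : W → V} (hf : Measurable f) (μ : ProbabilityMeasure W)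
    {s : Set V} (hs : MeasurableSet s) : (pushPM hf μ : Measure V) s = (μ : Measure W) (f ⁻¹' s) :=
  μ.map_apply' hf.aemeasurable hs

theorem image_update_eq_of_pushPM_eq {U : UpdFamily} (h2 : P2 U) {f : W → V} {g : T → V}
    (hf : Measurable f) (hg : Measurable g) (hfs : Function.Surjective f)
    (hgs : Function.Surjective g) {μ : ProbabilityMeasure W} {Λ : ProbabilityMeasure T}
    (h : pushPM hf μ = pushPM hg Λ) {B₀ A₀ : Set V} (hB₀ : MeasurableSet B₀)
    (hA₀ : MeasurableSet A₀) :
    (fun ν => ν (f ⁻¹' A₀)) '' U W {μ} (f ⁻¹' B₀) =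
      (fun ρ => ρ (g ⁻¹' A₀)) '' U T {Λ} (g ⁻¹' B₀) := by
  have hU : pushPM hf '' U W {μ} (f ⁻¹' B₀) = pushPM hg '' U T {Λ} (g ⁻¹' B₀) := by
    rw [← h2 W V f hf hfs {μ} B₀ hB₀, ← h2 T V g hg hgs {Λ} B₀ hB₀, image_singleton,
      image_singleton, h]
  calc (fun ν => ν (f ⁻¹' A₀)) '' U W {μ} (f ⁻¹' B₀)
      = (fun κ => κ A₀) '' (pushPM hf '' U W {μ} (f ⁻¹' B₀)) := by
        simp only [image_image, pushPM_apply hf _ hA₀]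
    _ = (fun ρ => ρ (g ⁻¹' A₀)) '' U T {Λ} (g ⁻¹' B₀) := by
        simp only [hU, image_image, pushPM_apply hg _ hA₀]

lemma nonempty_preimage_of_pushPM_eq {f : W → V} {g : T → V} (hf : Measurable f)
    (hg : Measurable g) {μ : ProbabilityMeasure W} {Λ : ProbabilityMeasure T}
    (h : pushPM hf μ = pushPM hg Λ) {s : Set V} (hs : MeasurableSet s) (hμ : μ (f ⁻¹' s) ≠ 0) :
    (g ⁻¹' s).Nonempty :=
  Λ.nonempty_of_apply_ne_zero (by rwa [← pushPM_apply hg _ hs, ← h, pushPM_apply hf _ hs])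

end Updates

section CellPushforward

variable {α β : Type} [MeasurableSpace α] [MeasurableSpace β] {A B : Set α} {A' B' : Set β}
  {μ : ProbabilityMeasure α} {ν : ProbabilityMeasure β}

lemma pushPM_cellIndex_eq
    (hB : MeasurableSet B) (hA : MeasurableSet A) (hB' : MeasurableSet B') (hA' : MeasurableSet A')
    (hBB' : (μ : Measure α) B = (ν : Measure β) B')
    (hAB : (μ : Measure α) (A ∩ B) = (ν : Measure β) (A' ∩ B')) :
    pushPM (measurable_cellIndex hB hA) μ = pushPM (measurable_cellIndex hB' hA') ν := by
  refine ProbabilityMeasure.toMeasure_injective (Measure.ext_iff_singleton.2 fun i => ?_)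
  simp only [toMeasure_pushPM_apply _ _ (measurableSet_singleton i)]
  match i with
  | 0 => simpa only [cellIndex_preimage_zero] using hAB
  | 1 =>
    rw [cellIndex_preimage_one, cellIndex_preimage_one,
      ← sdiff_inter_self_eq_sdiff (s := B) (t := A),
      ← sdiff_inter_self_eq_sdiff (s := B') (t := A'),
      measure_sdiff inter_subset_right (hA.inter hB).nullMeasurableSet (measure_ne_top _ _),
      measure_sdiff inter_subset_right (hA'.inter hB').nullMeasurableSet (measure_ne_top _ _),
      hBB', hAB]
  | 2 =>
    simp only [cellIndex_preimage_two, prob_compl_eq_one_sub hB, prob_compl_eq_one_sub hB', hBB']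

lemma pushPM_boolIndicator_eq (hA : MeasurableSet A) (hA' : MeasurableSet A')
    (h : (μ : Measure α) A = (ν : Measure β) A') :
    pushPM (measurable_boolIndicator hA) μ = pushPM (measurable_boolIndicator hA') ν := by
  refine ProbabilityMeasure.toMeasure_injective (Measure.ext_iff_singleton.2 fun i => ?_)
  simp only [toMeasure_pushPM_apply _ _ (measurableSet_singleton i)]
  cases i
  · simp only [preimage_boolIndicator_false, prob_compl_eq_one_sub hA, prob_compl_eq_one_sub hA', h]
  · simpa only [preimage_boolIndicator_true] using h

end CellPushforward

def ArcRepresentable (U : UpdFamily) {W : Type} [MeasurableSpace W] (Pr : ProbabilityMeasure W)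
    (A B : Set W) (p : ℝ) : Prop :=
  ∃ (Λ : ProbabilityMeasure ℝ) (E : Set ℝ), ∀ c : ℝ,
    (fun ν => ν A) '' U W {Pr} B = (fun ρ => ρ (periodicArc p c)) '' U ℝ {Λ} E

section Representations

variable {U : UpdFamily} {W : Type} [MeasurableSpace W] {Pr : ProbabilityMeasure W} {A B : Set W}

theorem arcRepresentable_of_compl_nonempty (h1 : P1 U) (h2 : P2 U) (hA : MeasurableSet A)
    (hB : MeasurableSet B) (hBc : Bᶜ.Nonempty) (hpos : 0 < condProb Pr A B)
    (hlt1 : condProb Pr A B < 1) : ArcRepresentable U Pr A B (condProb Pr A B) := by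
  set p := condProb Pr A B
  obtain ⟨hAB0, hABB⟩ := apply_inter_pos_and_lt_of_condProb hpos hlt1
  have hB0 : Pr B ≠ 0 := (hAB0.trans hABB).ne'
  -- `(0, 1]` models `B` and `(1, 1 / Pr B]` models `Bᶜ`
  set Λ := uniformIoc (Pr B)⁻¹ (inv_ne_zero hB0)
  have hΛ : ∀ S, (Λ : Measure ℝ) (S ∩ Ioc 0 1) = Pr B * volume (S ∩ Ioc 0 1) := fun S => by
    have hL : 1 ≤ (Pr B)⁻¹ := (one_le_inv₀ (pos_of_ne_zero hB0)).2 (Pr.apply_le_one B)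
    rw [uniformIoc_apply_inter_Ioc_one _ hL, ENNReal.coe_inv hB0, inv_inv]
  refine ⟨Λ, Ioc 0 1, fun c => ?_⟩
  set S := periodicArc p c
  have hBB' : (Pr : Measure W) B = (Λ : Measure ℝ) (Ioc 0 1) := by
    simpa [← ProbabilityMeasure.ennreal_coeFn_eq_coeFn_toMeasure] using (hΛ univ).symm
  have hAB : (Pr : Measure W) (A ∩ B) = (Λ : Measure ℝ) (S ∩ Ioc 0 1) := by
    rw [hΛ, volume_periodicArc_inter_Ioc (by exact_mod_cast hlt1.le), ENNReal.ofReal_coe_nnreal,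
      ← ProbabilityMeasure.ennreal_coeFn_eq_coeFn_toMeasure, ← ENNReal.coe_mul, mul_comm]
    exact congrArg _ (div_mul_cancel₀ _ hB0).symm
  have hpush := pushPM_cellIndex_eq hB hA measurableSet_Ioc (measurableSet_periodicArc p c) hBB' hAB
  have hcell0 : Pr (cellIndex B A ⁻¹' {0}) ≠ 0 := by
    rw [cellIndex_preimage_zero]; exact hAB0.ne'
  have hcell1 : Pr (cellIndex B A ⁻¹' {1}) ≠ 0 := by
    rw [cellIndex_preimage_one]; exact Pr.apply_diff_ne_zero_of_lt hABB
  have hfs : Function.Surjective (cellIndex B A) := by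
    refine cellIndex_surjective ?_ ?_ hBc
    · rw [← cellIndex_preimage_zero]; exact Pr.nonempty_of_apply_ne_zero hcell0
    · rw [← cellIndex_preimage_one]; exact Pr.nonempty_of_apply_ne_zero hcell1
  have hgs : Function.Surjective (cellIndex (Ioc 0 1) S) := by
    refine cellIndex_surjective ?_ ?_ ⟨0, by simp⟩
    · rw [← cellIndex_preimage_zero]
      exact nonempty_preimage_of_pushPM_eq _ _ hpush (.of_discrete) hcell0
    · rw [← cellIndex_preimage_one]
      exact nonempty_preimage_of_pushPM_eq _ _ hpush (.of_discrete) hcell1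
  have key := image_update_eq_of_pushPM_eq h2 _ _ hfs hgs hpush (B₀ := {2}ᶜ) (A₀ := {0})
    (.of_discrete) (.of_discrete)
  simp only [cellIndex_preimage_zero, cellIndex_preimage_compl_two] at key
  calc (fun ν => ν A) '' U W {Pr} B = (fun ν => ν (A ∩ B)) '' U W {Pr} B :=
        image_congr fun ν hν => (ν.apply_inter_of_apply_eq_one hB (h1 W {Pr} B hB ν hν) A).symm
    _ = (fun ρ => ρ (S ∩ Ioc 0 1)) '' U ℝ {Λ} (Ioc 0 1) := key
    _ = (fun ρ => ρ S) '' U ℝ {Λ} (Ioc 0 1) :=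
        image_congr fun ρ hρ => ρ.apply_inter_of_apply_eq_one measurableSet_Ioc
          (h1 ℝ {Λ} _ measurableSet_Ioc ρ hρ) S

theorem arcRepresentable_univ (h2 : P2 U) (hA : MeasurableSet A) (hpos : 0 < Pr A)
    (hlt1 : Pr A < 1) : ArcRepresentable U Pr A univ (Pr A) := by
  set Λ := uniformIoc 1 one_ne_zero
  refine ⟨Λ, univ, fun c => ?_⟩
  set S := periodicArc (Pr A) c
  have hA' : (Pr : Measure W) A = (Λ : Measure ℝ) S := by
    rw [uniformIoc_apply, NNReal.coe_one, ENNReal.coe_one, inv_one, one_mul, inter_comm,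
      volume_periodicArc_inter_Ioc (by exact_mod_cast hlt1.le), ENNReal.ofReal_coe_nnreal,
      ProbabilityMeasure.ennreal_coeFn_eq_coeFn_toMeasure]
  have hpush := pushPM_boolIndicator_eq hA (measurableSet_periodicArc _ c) hA'
  have hcellt : Pr (A.boolIndicator ⁻¹' {true}) ≠ 0 := by
    rw [preimage_boolIndicator_true]; exact hpos.ne'
  have hcellf : Pr (A.boolIndicator ⁻¹' {false}) ≠ 0 := by
    rw [preimage_boolIndicator_false, compl_eq_univ_sdiff]
    exact Pr.apply_diff_ne_zero_of_lt (by simpa using hlt1)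
  have hfs : Function.Surjective A.boolIndicator := by
    refine boolIndicator_surjective ?_ ?_
    · rw [← preimage_boolIndicator_true A]; exact Pr.nonempty_of_apply_ne_zero hcellt
    · rw [← preimage_boolIndicator_false A]; exact Pr.nonempty_of_apply_ne_zero hcellf
  have hgs : Function.Surjective S.boolIndicator := by
    refine boolIndicator_surjective ?_ ?_
    · rw [← preimage_boolIndicator_true S]
      exact nonempty_preimage_of_pushPM_eq _ _ hpush (.of_discrete) hcellt
    · rw [← preimage_boolIndicator_false S]
      exact nonempty_preimage_of_pushPM_eq _ _ hpush (.of_discrete) hcellf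
  simpa only [preimage_boolIndicator_true, preimage_univ] using
    image_update_eq_of_pushPM_eq h2 _ _ hfs hgs hpush (B₀ := univ) (A₀ := {true})
      MeasurableSet.univ (.of_discrete)

end Representations

theorem stmt0_general (U : UpdFamily) (h1 : P1 U) (h2 : P2 U)
    (W : Type) [MeasurableSpace W] (Pr : ProbabilityMeasure W) (A B : Set W)
    (hA : MeasurableSet A) (hB : MeasurableSet B)
    (hpos : 0 < condProb Pr A B) (hlt1 : condProb Pr A B < 1)
    (Pr' : ProbabilityMeasure W) (hPr' : Pr' ∈ U W {Pr} B)
    (hless : Pr' A < condProb Pr A B) :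
    ∃ Pr'' ∈ U W {Pr} B, condProb Pr A B < Pr'' A := by
  set p := condProb Pr A B
  obtain ⟨Λ, E, hrep⟩ : ArcRepresentable U Pr A B p := by
    by_cases hBc : Bᶜ.Nonempty
    · exact arcRepresentable_of_compl_nonempty h1 h2 hA hB hBc hpos hlt1
    · obtain rfl : B = univ := compl_empty_iff.1 (not_nonempty_iff_eq_empty.1 hBc)
      simp only [p, condProb_univ] at hpos hlt1 ⊢
      exact arcRepresentable_univ h2 hA hpos hlt1
  obtain ⟨ρ, hρ, hρA⟩ := (hrep 0).subset (mem_image_of_mem _ hPr')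
  obtain ⟨c, hc⟩ := ρ.exists_lt_apply_periodicArc hlt1.le (hρA.trans_lt hless)
  obtain ⟨Pr'', hPr'', hPr''A⟩ := (hrep c).superset (mem_image_of_mem _ hρ)
  exact ⟨Pr'', hPr'', hc.trans_eq hPr''A.symm⟩

/-- if some `Pr' ∈ Upd(Pr,B)` has `Pr'(A) < Pr(A|B)` with `0 < Pr(A|B) < 1`,
then some `Pr'' ∈ Upd(Pr,B)` has `Pr''(A) > Pr(A|B)`. -/
theorem stmt0 (U : UpdFamily) (hbase : UpdBase U) (h1 : P1 U) (h2 : P2 U)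
    (W : Type) [MeasurableSpace W] (Pr : ProbabilityMeasure W) (A B : Set W)
    (hA : MeasurableSet A) (hB : MeasurableSet B)
    (hpos : 0 < condProb Pr A B) (hlt1 : condProb Pr A B < 1)
    (Pr' : ProbabilityMeasure W) (hPr' : Pr' ∈ U W {Pr} B)
    (hless : Pr' A < condProb Pr A B) :
    ∃ Pr'' ∈ U W {Pr} B, condProb Pr A B < Pr'' A :=
  stmt0_general U h1 h2 W Pr A B hA hB hpos hlt1 Pr' hPr' hless
end

section
/- If Upd satisfies P1, P3, and P4, Pr is a probability measure with Pr(B) > 0, A ⊆ B, and Pr(A|B) = 1, then every Pr' ∈ Upd(Pr,B) satisfies Pr'(A) = 1; dually, if Pr(A|B) = 0 then every Pr' ∈ Upd(Pr,B) satisfies Pr'(A) = 0. -/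
open MeasureTheory ProbabilityTheory Set
open scoped Classical NNReal ENNReal

/-!
Sure evidence is inert (P4), so by compositionality (P3) updating on `B` is the same as updating
on `C ∩ B` for any `C` of prior probability one, and then P1 forces every posterior to give
`C ∩ B` probability one. If `Pr(A|B) = 1`, take `C = (B \ A)ᶜ`, so that `C ∩ B = A`; if
`Pr(A|B) = 0`, take `C = Aᶜ`, so that `C ∩ B` is disjoint from `A`.
-/

namespace MeasureTheory.ProbabilityMeasure

variable {W : Type} [MeasurableSpace W] (μ : ProbabilityMeasure W) {s t : Set W}

lemma apply_compl_eq_one_iff (hs : MeasurableSet s) : μ sᶜ = 1 ↔ μ s = 0 := by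
  rw [null_iff_toMeasure_null, ← prob_compl_eq_one_iff hs, ← ennreal_coeFn_eq_coeFn_toMeasure,
    ENNReal.coe_eq_one]

lemma apply_sdiff_add_apply_inter (s : Set W) (ht : MeasurableSet t) :
    μ (s \ t) + μ (s ∩ t) = μ s := by
  apply ENNReal.coe_injective
  push_cast
  simp only [ennreal_coeFn_eq_coeFn_toMeasure]
  exact measure_sdiff_add_inter s ht

end MeasureTheory.ProbabilityMeasure

section CondProb

variable {W : Type} [MeasurableSpace W] {μ : ProbabilityMeasure W} {A B : Set W}

lemma apply_sdiff_eq_zero_of_condProb_eq_one (hA : MeasurableSet A)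
    (h : condProb μ A B = 1) : μ (B \ A) = 0 := by
  have hB : μ B ≠ 0 := fun hB ↦ by simp [condProb, hB] at h
  have hAB : μ (B ∩ A) = μ B := by
    rwa [condProb, div_eq_one_iff_eq hB, inter_comm] at h
  simpa [hAB] using μ.apply_sdiff_add_apply_inter B hA

lemma apply_inter_eq_zero_of_condProb_eq_zero (hB : μ B ≠ 0) (h : condProb μ A B = 0) :
    μ (A ∩ B) = 0 :=
  (div_eq_zero_iff.mp h).resolve_right hB

end CondProb

section Update

variable {U : UpdFamily} {W : Type} [MeasurableSpace W] {X : Set (ProbabilityMeasure W)}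
  {B C : Set W}

lemma upd_eq_upd_inter_of_forall_apply_eq_one (h3 : P3 U) (h4 : P4 U) (hB : MeasurableSet B)
    (hC : MeasurableSet C) (hXC : ∀ μ ∈ X, μ C = 1) : U W X B = U W X (C ∩ B) := by
  rw [← h3 W X C B hC hB, h4 W X C hC hXC]

lemma apply_inter_eq_one_of_mem_upd (h1 : P1 U) (h3 : P3 U) (h4 : P4 U)
    (hB : MeasurableSet B) (hC : MeasurableSet C) (hXC : ∀ μ ∈ X, μ C = 1)
    {ν : ProbabilityMeasure W} (hν : ν ∈ U W X B) : ν (C ∩ B) = 1 := by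
  rw [upd_eq_upd_inter_of_forall_apply_eq_one h3 h4 hB hC hXC] at hν
  exact h1 W X (C ∩ B) (hC.inter hB) ν hν

end Update

theorem stmt6_general (U : UpdFamily) (h1 : P1 U) (h3 : P3 U) (h4 : P4 U)
    (W : Type) [MeasurableSpace W] (Pr : ProbabilityMeasure W) (A B : Set W)
    (hA : MeasurableSet A) (hB : MeasurableSet B) (hAB : A ⊆ B) (hBpos : 0 < Pr B) :
    (condProb Pr A B = 1 → ∀ ν ∈ U W {Pr} B, ν A = 1) ∧
    (condProb Pr A B = 0 → ∀ ν ∈ U W {Pr} B, ν A = 0) := by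
  constructor
  · intro h ν hν
    have hsure : ∀ μ ∈ ({Pr} : Set _), μ (B \ A)ᶜ = 1 := by
      rintro μ rfl
      exact (μ.apply_compl_eq_one_iff (hB.diff hA)).mpr
        (apply_sdiff_eq_zero_of_condProb_eq_one hA h)
    have hνA := apply_inter_eq_one_of_mem_upd h1 h3 h4 hB (hB.diff hA).compl hsure hν
    rwa [inter_comm, ← sdiff_eq, sdiff_sdiff_cancel_left hAB] at hνA
  · intro h ν hν
    have hsure : ∀ μ ∈ ({Pr} : Set _), μ Aᶜ = 1 := by
      rintro μ rfl
      rw [μ.apply_compl_eq_one_iff hA, ← inter_eq_left.mpr hAB]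
      exact apply_inter_eq_zero_of_condProb_eq_zero hBpos.ne' h
    have hνAcB := apply_inter_eq_one_of_mem_upd h1 h3 h4 hB hA.compl hsure hν
    have hνAc : ν Aᶜ = 1 :=
      le_antisymm (ν.apply_le_one _) (hνAcB ▸ ν.apply_mono inter_subset_left)
    exact (ν.apply_compl_eq_one_iff hA).mp hνAc

/-- zero-one preservation under P1, P3, P4. -/
theorem stmt6 (U : UpdFamily) (hbase : UpdBase U) (h1 : P1 U) (h3 : P3 U) (h4 : P4 U)
    (W : Type) [MeasurableSpace W] (Pr : ProbabilityMeasure W) (A B : Set W)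
    (hA : MeasurableSet A) (hB : MeasurableSet B) (hAB : A ⊆ B) (hBpos : 0 < Pr B) :
    (condProb Pr A B = 1 → ∀ ν ∈ U W {Pr} B, ν A = 1) ∧
    (condProb Pr A B = 0 → ∀ ν ∈ U W {Pr} B, ν A = 0) :=
  stmt6_general U h1 h3 h4 W Pr A B hA hB hAB hBpos
end

section
/- Suppose Upd satisfies P2 and P3, and Upd(Pr,B) = ∅ for some measure space M, probability measure Pr, and event B with Pr(B) = α < 1. Then for every measure space M', probability measure Pr', and event B' with Pr'(B') < α, we have Upd(Pr',B') = ∅. -/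
open MeasureTheory ProbabilityTheory Set
open scoped Classical NNReal ENNReal

/-!
By P2, whether `Upd({Pr}, B)` is empty depends only on `Pr(B)`, as long as `B` is neither empty
nor everything: push the measure forward along the indicator of `B` to `Bool`. By P3,
`Upd(X, B) = ∅` and `Upd(Y, C) = ∅` give `Upd(X, B ∩ C) = ∅`, because
`Upd(∅, C) = Upd(Upd(Y, C), C) = Upd(Y, C ∩ C) = ∅`.

On `Fin 3` let `Pr''` have point masses `(1 - α, α - β, β)` and `Q` point masses
`(α, 1 - α, 0)`. Then `Pr''{1,2} = Q{0,2} = Q{0} = α`, so the updates of `Pr''` on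
`{1,2} ∩ {0,2} = {2}` and on `{1,2} ∩ {0} = ∅` are empty. Since `Pr''{2} = β = Pr'(B')`, this
transfers to `B'` through `Bool`, or through `Unit` when `B' = ∅`.
-/

open MeasureTheory Set

namespace MeasureTheory.ProbabilityMeasure

variable {Ω : Type*} [MeasurableSpace Ω]

lemma nonempty_of_apply_pos (μ : ProbabilityMeasure Ω) {s : Set Ω} (h : 0 < μ s) :
    s.Nonempty :=
  nonempty_iff_ne_empty.2 fun hs ↦ by simp [hs] at h

lemma compl_nonempty_of_apply_lt_one (μ : ProbabilityMeasure Ω) {s : Set Ω} (h : μ s < 1) :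
    sᶜ.Nonempty :=
  nonempty_compl.2 fun hs ↦ by simp [hs] at h

lemma eq_of_apply_true_eq {μ ν : ProbabilityMeasure Bool} (h : μ {true} = ν {true}) :
    μ = ν := by
  refine toMeasure_injective (Measure.ext_iff_singleton.2 fun b ↦ ?_)
  have h' : (μ : Measure Bool) {true} = (ν : Measure Bool) {true} := by
    simpa [ennreal_coeFn_eq_coeFn_toMeasure] using congr_arg ((↑) : ℝ≥0 → ℝ≥0∞) h
  cases b
  · rw [← Bool.not_true, ← Bool.compl_singleton,
      prob_compl_eq_one_sub (measurableSet_singleton _),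
      prob_compl_eq_one_sub (measurableSet_singleton _), h']
  · exact h'

instance [Subsingleton Ω] : Subsingleton (ProbabilityMeasure Ω) where
  allEq μ ν := eq_of_forall_apply_eq μ ν fun s _ ↦ by
    rcases s.eq_empty_or_nonempty with rfl | hs
    · simp
    · simp [hs.eq_univ]

noncomputable def ofWeights {ι : Type*} [Fintype ι] [MeasurableSpace ι] (p : ι → ℝ≥0)
    (hp : ∑ i, p i = 1) : ProbabilityMeasure ι :=
  ⟨(PMF.ofFintype (fun i ↦ (p i : ℝ≥0∞)) (by exact_mod_cast hp)).toMeasure, inferInstance⟩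

lemma ofWeights_apply_finset {ι : Type*} [Fintype ι] [MeasurableSpace ι]
    [MeasurableSingletonClass ι] {p : ι → ℝ≥0} (hp : ∑ i, p i = 1) (s : Finset ι) :
    ofWeights p hp s = ∑ i ∈ s, p i := by
  rw [ofWeights, mk_apply, PMF.toMeasure_apply_finset]
  simp only [PMF.ofFintype_apply]
  rw [← ENNReal.ofNNReal_finsetSum, ENNReal.toNNReal_coe]

end MeasureTheory.ProbabilityMeasure

lemma Set.surjective_boolIndicator {α : Type*} {s : Set α} (hs : s.Nonempty)
    (hsc : sᶜ.Nonempty) : Function.Surjective s.boolIndicator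
  | true => hs.imp fun _ ↦ (s.mem_iff_boolIndicator _).1
  | false => hsc.imp fun _ ↦ (s.notMem_iff_boolIndicator _).1

lemma measurable_boolIndicator_s8 {α : Type*} [MeasurableSpace α] {s : Set α}
    (hs : MeasurableSet s) : Measurable s.boolIndicator :=
  measurable_to_countable' fun
    | true => by rw [preimage_boolIndicator_true]; exact hs
    | false => by rw [preimage_boolIndicator_false]; exact hs.compl

section Update

variable {U : UpdFamily}

lemma P2.update_preimage_eq_empty_iff (h2 : P2 U) {W V : Type} [MeasurableSpace W]
    [MeasurableSpace V] {f : W → V} (hf : Measurable f) (hfs : Function.Surjective f)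
    (μ : ProbabilityMeasure W) {S : Set V} (hS : MeasurableSet S) :
    U W {μ} (f ⁻¹' S) = ∅ ↔ U V {pushPM hf μ} S = ∅ := by
  rw [← image_singleton, h2 W V f hf hfs {μ} S hS, image_eq_empty]

lemma P2.update_preimage_eq_empty_iff_of_pushPM_eq (h2 : P2 U) {W W' V : Type}
    [MeasurableSpace W] [MeasurableSpace W'] [MeasurableSpace V] {f : W → V} {g : W' → V}
    (hf : Measurable f) (hfs : Function.Surjective f) (hg : Measurable g)
    (hgs : Function.Surjective g) {μ : ProbabilityMeasure W} {ν : ProbabilityMeasure W'}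
    (hμν : pushPM hf μ = pushPM hg ν) {S : Set V} (hS : MeasurableSet S) :
    U W {μ} (f ⁻¹' S) = ∅ ↔ U W' {ν} (g ⁻¹' S) = ∅ := by
  rw [h2.update_preimage_eq_empty_iff hf hfs μ hS, h2.update_preimage_eq_empty_iff hg hgs ν hS,
    hμν]

lemma P2.update_eq_empty_iff_of_apply_eq (h2 : P2 U) {W W' : Type} [MeasurableSpace W]
    [MeasurableSpace W'] {μ : ProbabilityMeasure W} {ν : ProbabilityMeasure W'}
    {B : Set W} {D : Set W'} (hB : MeasurableSet B) (hD : MeasurableSet D)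
    (hBne : B.Nonempty) (hBcne : Bᶜ.Nonempty) (hDne : D.Nonempty) (hDcne : Dᶜ.Nonempty)
    (hμν : μ B = ν D) :
    U W {μ} B = ∅ ↔ U W' {ν} D = ∅ := by
  have hpush :
      pushPM (measurable_boolIndicator_s8 hB) μ = pushPM (measurable_boolIndicator_s8 hD) ν := by
    refine ProbabilityMeasure.eq_of_apply_true_eq ?_
    simp only [pushPM, ProbabilityMeasure.map_apply _ _ (measurableSet_singleton true),
      preimage_boolIndicator_true, hμν]
  simpa only [preimage_boolIndicator_true] using
    h2.update_preimage_eq_empty_iff_of_pushPM_eq _ (surjective_boolIndicator hBne hBcne) _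
      (surjective_boolIndicator hDne hDcne) hpush (measurableSet_singleton true)

lemma P2.update_empty_eq_empty_iff (h2 : P2 U) {W W' : Type} [MeasurableSpace W]
    [MeasurableSpace W'] (μ : ProbabilityMeasure W) (ν : ProbabilityMeasure W') :
    U W {μ} ∅ = ∅ ↔ U W' {ν} ∅ = ∅ := by
  have := μ.nonempty
  have := ν.nonempty
  simpa only [preimage_empty] using h2.update_preimage_eq_empty_iff_of_pushPM_eq
    (f := fun _ ↦ ()) (g := fun _ ↦ ()) measurable_const
    (Function.surjective_to_subsingleton _) measurable_const
    (Function.surjective_to_subsingleton _) (Subsingleton.elim _ _) MeasurableSet.empty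

lemma P3.update_inter_eq_empty (h3 : P3 U) {W : Type} [MeasurableSpace W]
    {X Y : Set (ProbabilityMeasure W)} {B C : Set W} (hB : MeasurableSet B)
    (hC : MeasurableSet C) (hXB : U W X B = ∅) (hYC : U W Y C = ∅) :
    U W X (B ∩ C) = ∅ := by
  have hC_empty : U W ∅ C = ∅ := by
    calc U W ∅ C = U W (U W Y C) C := by rw [hYC]
      _ = ∅ := by rw [h3 W Y C C hC hC, inter_self, hYC]
  rw [← h3 W X B C hB hC, hXB, hC_empty]

lemma P3.exists_fin_three_update_eq_empty (h3 : P3 U) {α β : ℝ≥0} (hβα : β ≤ α)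
    (hα1 : α ≤ 1)
    (hα_empty : ∀ (ρ : ProbabilityMeasure (Fin 3)) {D : Finset (Fin 3)} {i j : Fin 3},
      i ∈ D → j ∉ D → ρ D = α → U (Fin 3) {ρ} D = ∅) :
    ∃ μ : ProbabilityMeasure (Fin 3),
      μ {2} = β ∧ U (Fin 3) {μ} {2} = ∅ ∧ U (Fin 3) {μ} ∅ = ∅ := by
  let μ := ProbabilityMeasure.ofWeights ![1 - α, α - β, β] (by
    simp only [Fin.sum_univ_three, Matrix.cons_val]
    rw [add_assoc, tsub_add_cancel_of_le hβα, tsub_add_cancel_of_le hα1])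
  let ν := ProbabilityMeasure.ofWeights ![α, 1 - α, 0] (by
    simp only [Fin.sum_univ_three, Matrix.cons_val]
    rw [add_zero, add_tsub_cancel_of_le hα1])
  have hμ12 : U (Fin 3) {μ} ↑({1, 2} : Finset (Fin 3)) = ∅ := hα_empty μ (i := 1) (j := 0)
    (by decide) (by decide)
    (by rw [ProbabilityMeasure.ofWeights_apply_finset]; simp [tsub_add_cancel_of_le hβα])
  have hν0 : U (Fin 3) {ν} ↑({0} : Finset (Fin 3)) = ∅ := hα_empty ν (i := 0) (j := 1)
    (by decide) (by decide) (by rw [ProbabilityMeasure.ofWeights_apply_finset]; simp)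
  have hν02 : U (Fin 3) {ν} ↑({0, 2} : Finset (Fin 3)) = ∅ := hα_empty ν (i := 0) (j := 1)
    (by decide) (by decide) (by rw [ProbabilityMeasure.ofWeights_apply_finset]; simp)
  have hμ2 := h3.update_inter_eq_empty .of_discrete .of_discrete hμ12 hν02
  have hμ0 := h3.update_inter_eq_empty .of_discrete .of_discrete hμ12 hν0
  rw [← Finset.coe_inter, show ({1, 2} ∩ {0, 2} : Finset (Fin 3)) = {2} by decide,
    Finset.coe_singleton] at hμ2
  rw [← Finset.coe_inter, show ({1, 2} ∩ {0} : Finset (Fin 3)) = ∅ by decide,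
    Finset.coe_empty] at hμ0
  refine ⟨μ, ?_, hμ2, hμ0⟩
  rw [← Finset.coe_singleton, ProbabilityMeasure.ofWeights_apply_finset]
  simp

end Update

/-- under P2 and P3, emptiness of the update transfers to all events of
probability less than `α`. -/
theorem stmt8 (U : UpdFamily) (h2 : P2 U) (h3 : P3 U)
    (W : Type) [MeasurableSpace W] (Pr : ProbabilityMeasure W) (B : Set W)
    (hB : MeasurableSet B) (α : ℝ≥0) (hα : Pr B = α) (hα1 : α < 1)
    (hempty : U W {Pr} B = ∅) :
    ∀ (W' : Type) [MeasurableSpace W'] (Pr' : ProbabilityMeasure W') (B' : Set W'),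
      MeasurableSet B' → Pr' B' < α → U W' {Pr'} B' = ∅ := by
  intro W' _ Pr' B' hB' hβα
  have hα_empty (ρ : ProbabilityMeasure (Fin 3)) {D : Finset (Fin 3)} {i j : Fin 3}
      (hi : i ∈ D) (hj : j ∉ D) (hρ : ρ D = α) : U (Fin 3) {ρ} D = ∅ :=
    (h2.update_eq_empty_iff_of_apply_eq hB .of_discrete
      (Pr.nonempty_of_apply_pos (hα ▸ pos_of_gt hβα))
      (Pr.compl_nonempty_of_apply_lt_one (hα ▸ hα1)) ⟨i, hi⟩ ⟨j, hj⟩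
      (hα.trans hρ.symm)).1 hempty
  obtain ⟨μ, hμB', hμ2, hμ0⟩ := h3.exists_fin_three_update_eq_empty hβα.le hα1.le hα_empty
  rcases B'.eq_empty_or_nonempty with rfl | hB'ne
  · exact (h2.update_empty_eq_empty_iff μ Pr').1 hμ0
  · exact (h2.update_eq_empty_iff_of_apply_eq .of_discrete hB' (singleton_nonempty 2)
      ⟨0, by simp⟩ hB'ne (Pr'.compl_nonempty_of_apply_lt_one (hβα.trans hα1)) hμB').1 hμ2
end

section
/- If Upd satisfies P1–P4 and the quantity U(A,B) := sup over Pr' ∈ Upd(Pr,B) of Pr'(A)·Pr(B)/Pr(A) equals 1 for all measure spaces M, measures Pr, and events A ⊆ B with Pr(A) > 0, then Upd acts like conditioning on singletons: Upd(Pr,B) ⊆ {Pr(·|B)} whenever Pr(B) > 0. -/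
open MeasureTheory ProbabilityTheory Set
open scoped Classical NNReal ENNReal

/-!
Every update `ν ∈ Upd(Pr, B)` satisfies `ν(A) ≤ Pr(A | B)` for `A ⊆ B` with `Pr(A) > 0`,
since `U(A, B) = 1`. The bound survives on null events: lift `Pr` to `W × Bool` by a fair coin,
which by P2 lifts `ν` as well, and split `B × Bool` into two sets `S`, `T` of prior mass
`Pr(B)/2` each, both containing `A × Bool` and overlapping exactly there. Then the lift `ν̃` of `ν`
gives each of them mass at most `1/2`, so by P1 `1 + ν(A) = ν̃(S) + ν̃(T) ≤ 1`. Hence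
`ν ≤ Pr(· | B)`, and two probability measures so ordered coincide.
-/

def UpdBoundedByCond (U : UpdFamily) : Prop :=
  ∀ (W : Type) [MeasurableSpace W] (Pr : ProbabilityMeasure W) (A B : Set W),
    MeasurableSet A → MeasurableSet B → A ⊆ B → (Pr : Measure W) A ≠ 0 →
    ∀ ν ∈ U W {Pr} B, (ν : Measure W) A ≤ (Pr : Measure W)[A | B]

lemma toMeasure_condPM {W : Type} [MeasurableSpace W] {Pr : ProbabilityMeasure W} {B : Set W}
    (hB : (Pr : Measure W) B ≠ 0) : (condPM Pr B : Measure W) = (Pr : Measure W)[|B] := by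
  simp [condPM, hB]

lemma P1.toMeasure_apply_eq_one {U : UpdFamily} (h1 : P1 U) {W : Type}
    [MeasurableSpace W] {X : Set (ProbabilityMeasure W)} {B : Set W} (hB : MeasurableSet B)
    {ν : ProbabilityMeasure W} (hν : ν ∈ U W X B) : (ν : Measure W) B = 1 := by
  rw [← ProbabilityMeasure.ennreal_coeFn_eq_coeFn_toMeasure, h1 W X B hB ν hν, ENNReal.coe_one]

lemma updBoundedByCond_of_sSup_eq_one {U : UpdFamily}
    (hsup : ∀ (W : Type) [MeasurableSpace W] (Pr : ProbabilityMeasure W) (A B : Set W),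
      MeasurableSet A → MeasurableSet B → A ⊆ B → 0 < Pr A →
      sSup {x : EReal | ∃ ν ∈ U W {Pr} B, x = (((ν A * Pr B / Pr A : ℝ≥0) : ℝ) : EReal)}
        = 1) :
    UpdBoundedByCond U := by
  intro W _ Pr A B hA hB hAB hA0 ν hν
  have hPrA : 0 < Pr A := pos_iff_ne_zero.2 (by simpa using hA0)
  have hratio : ν A * Pr B / Pr A ≤ 1 := by
    have h := le_sSup (s := {x : EReal | ∃ ν ∈ U W {Pr} B,
      x = (((ν A * Pr B / Pr A : ℝ≥0) : ℝ) : EReal)}) ⟨ν, hν, rfl⟩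
    rw [hsup W Pr A B hA hB hAB hPrA] at h
    exact_mod_cast h
  have hmul : (ν : Measure W) A * (Pr : Measure W) B ≤ (Pr : Measure W) A := by
    simp only [← ProbabilityMeasure.ennreal_coeFn_eq_coeFn_toMeasure]
    exact_mod_cast (div_le_one hPrA).1 hratio
  have hB0 : (Pr : Measure W) B ≠ 0 := fun h => hA0 (measure_mono_null hAB h)
  rw [cond_apply hB, inter_eq_right.2 hAB, ← ENNReal.div_eq_inv_mul,
    ENNReal.le_div_iff_mul_le (.inl hB0) (.inl (measure_ne_top _ _))]
  exact hmul

namespace UpdBoundedByCond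

variable {U : UpdFamily}

theorem apply_le_inv_two (hU : UpdBoundedByCond U) {W : Type} [MeasurableSpace W]
    {Pr : ProbabilityMeasure W} {X B : Set W} (hX : MeasurableSet X) (hB : MeasurableSet B)
    (hXB : X ⊆ B) (hX0 : (Pr : Measure W) X ≠ 0)
    (hXhalf : (Pr : Measure W) X ≤ (Pr : Measure W) B / 2) {ν : ProbabilityMeasure W}
    (hν : ν ∈ U W {Pr} B) : (ν : Measure W) X ≤ 2⁻¹ := by
  have hB0 : (Pr : Measure W) B ≠ 0 := fun h => hX0 (measure_mono_null hXB h)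
  calc (ν : Measure W) X ≤ (Pr : Measure W)[X | B] := hU W Pr X B hX hB hXB hX0 ν hν
    _ = ((Pr : Measure W) B)⁻¹ * (Pr : Measure W) X := by
      rw [cond_apply hB, inter_eq_right.2 hXB]
    _ ≤ ((Pr : Measure W) B)⁻¹ * ((Pr : Measure W) B / 2) := by gcongr
    _ = 2⁻¹ := by
      rw [← mul_div_assoc, ENNReal.inv_mul_cancel hB0 (measure_ne_top _ _), one_div]

theorem apply_inter_eq_zero (hU : UpdBoundedByCond U) (h1 : P1 U) {W : Type}
    [MeasurableSpace W] {Pr : ProbabilityMeasure W} {S T B : Set W} (hS : MeasurableSet S)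
    (hT : MeasurableSet T) (hST : S ∪ T = B) (hS0 : (Pr : Measure W) S ≠ 0)
    (hT0 : (Pr : Measure W) T ≠ 0) (hShalf : (Pr : Measure W) S ≤ (Pr : Measure W) B / 2)
    (hThalf : (Pr : Measure W) T ≤ (Pr : Measure W) B / 2) {ν : ProbabilityMeasure W}
    (hν : ν ∈ U W {Pr} B) : (ν : Measure W) (S ∩ T) = 0 := by
  have hB : MeasurableSet B := hST ▸ hS.union hT
  have hsum : 1 + (ν : Measure W) (S ∩ T) ≤ 1 + 0 := by
    calc 1 + (ν : Measure W) (S ∩ T) = (ν : Measure W) S + (ν : Measure W) T := by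
          rw [← measure_union_add_inter S hT, hST, h1.toMeasure_apply_eq_one hB hν]
      _ ≤ 2⁻¹ + 2⁻¹ :=
          add_le_add (hU.apply_le_inv_two hS hB (hST ▸ subset_union_left) hS0 hShalf hν)
            (hU.apply_le_inv_two hT hB (hST ▸ subset_union_right) hT0 hThalf hν)
      _ = 1 + 0 := by rw [ENNReal.inv_two_add_inv_two, add_zero]
  exact le_zero_iff.1 ((ENNReal.add_le_add_iff_left ENNReal.one_ne_top).1 hsum)

theorem apply_eq_zero (hU : UpdBoundedByCond U) (h1 : P1 U) (h2 : P2 U) {W : Type}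
    [MeasurableSpace W] {Pr : ProbabilityMeasure W} {A B : Set W} (hA : MeasurableSet A)
    (hB : MeasurableSet B) (hAB : A ⊆ B) (hB0 : (Pr : Measure W) B ≠ 0)
    (hA0 : (Pr : Measure W) A = 0) {ν : ProbabilityMeasure W} (hν : ν ∈ U W {Pr} B) :
    (ν : Measure W) A = 0 := by
  let coin : ProbabilityMeasure Bool := ⟨(PMF.uniformOfFintype Bool).toMeasure, inferInstance⟩
  have hcoin (b : Bool) : (coin : Measure Bool) {b} = 2⁻¹ := by simp [coin]
  have hlift := h2 (W × Bool) W Prod.fst measurable_fst Prod.fst_surjective {Pr.prod coin} B hB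
  rw [image_singleton, pushPM, ProbabilityMeasure.map_fst_prod] at hlift
  obtain ⟨ν', hν', rfl⟩ := hlift ▸ hν
  let S (b : Bool) : Set (W × Bool) := Prod.fst ⁻¹' A ∪ B ×ˢ {b}
  have hS (b : Bool) : MeasurableSet (S b) :=
    (measurable_fst hA).union (hB.prod (measurableSet_singleton b))
  have hPrA : (Pr.prod coin : Measure (W × Bool)) (Prod.fst ⁻¹' A) = 0 := by
    rw [← prod_univ, ProbabilityMeasure.toMeasure_prod, Measure.prod_prod, hA0, zero_mul]
  have hPrS (b : Bool) : (Pr.prod coin : Measure (W × Bool)) (S b) = (Pr : Measure W) B / 2 := by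
    rw [measure_congr (union_ae_eq_right_of_ae_eq_empty (ae_eq_empty.mpr hPrA)),
      ProbabilityMeasure.toMeasure_prod, Measure.prod_prod, hcoin, ENNReal.div_eq_inv_mul, mul_comm]
  have hPrB : (Pr.prod coin : Measure (W × Bool)) (Prod.fst ⁻¹' B) = (Pr : Measure W) B := by
    rw [← prod_univ, ProbabilityMeasure.toMeasure_prod, Measure.prod_prod, measure_univ, mul_one]
  have hS0 (b : Bool) : (Pr.prod coin : Measure (W × Bool)) (S b) ≠ 0 := by
    rw [hPrS]; simpa using hB0
  rw [pushPM, ProbabilityMeasure.toMeasure_map, Measure.map_apply measurable_fst hA]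
  convert hU.apply_inter_eq_zero h1 (hS true) (hS false) ?_ (hS0 true) (hS0 false)
    (hPrB ▸ (hPrS true).le) (hPrB ▸ (hPrS false).le) hν' using 2
  all_goals ext ⟨w, b⟩; have := @hAB w; cases b <;> simp [S] <;> tauto

theorem eq_condPM (hU : UpdBoundedByCond U) (h1 : P1 U) (h2 : P2 U) {W : Type}
    [MeasurableSpace W] {Pr : ProbabilityMeasure W} {B : Set W} (hB : MeasurableSet B)
    (hB0 : (Pr : Measure W) B ≠ 0) {ν : ProbabilityMeasure W} (hν : ν ∈ U W {Pr} B) :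
    ν = condPM Pr B := by
  have := cond_isProbabilityMeasure hB0
  apply ProbabilityMeasure.toMeasure_injective
  rw [toMeasure_condPM hB0]
  refine Measure.eq_of_le_of_isProbabilityMeasure (Measure.le_intro fun s hs _ => ?_)
  have hνBc : (ν : Measure W) Bᶜ = 0 :=
    (prob_compl_eq_zero_iff hB).2 (h1.toMeasure_apply_eq_one hB hν)
  rw [← measure_inter_conull hνBc, ← cond_inter_self hB, inter_comm]
  by_cases h0 : (Pr : Measure W) (B ∩ s) = 0
  · rw [hU.apply_eq_zero h1 h2 (hB.inter hs) hB inter_subset_left hB0 h0 hν]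
    exact zero_le
  · exact hU W Pr _ B (hB.inter hs) hB inter_subset_left h0 ν hν

end UpdBoundedByCond

theorem stmt11_general (U : UpdFamily) (h1 : P1 U) (h2 : P2 U)
    (hsup : ∀ (W : Type) [MeasurableSpace W] (Pr : ProbabilityMeasure W) (A B : Set W),
      MeasurableSet A → MeasurableSet B → A ⊆ B → 0 < Pr A →
      sSup {x : EReal | ∃ ν ∈ U W {Pr} B, x = (((ν A * Pr B / Pr A : ℝ≥0) : ℝ) : EReal)}
        = 1) :
    ∀ (W : Type) [MeasurableSpace W] (Pr : ProbabilityMeasure W) (B : Set W),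
      MeasurableSet B → 0 < Pr B → U W {Pr} B ⊆ {condPM Pr B} := by
  intro W _ Pr B hB hB0 ν hν
  exact (updBoundedByCond_of_sSup_eq_one hsup).eq_condPM h1 h2 hB (by simpa using hB0.ne') hν

/-- under P1–P4, if the quantity `U(A,B)` always equals 1, then the update
function acts like conditioning on singletons. -/
theorem stmt11 (U : UpdFamily) (hbase : UpdBase U) (h1 : P1 U) (h2 : P2 U) (h3 : P3 U)
    (h4 : P4 U)
    (hsup : ∀ (W : Type) [MeasurableSpace W] (Pr : ProbabilityMeasure W) (A B : Set W),
      MeasurableSet A → MeasurableSet B → A ⊆ B → 0 < Pr A →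
      sSup {x : EReal | ∃ ν ∈ U W {Pr} B, x = (((ν A * Pr B / Pr A : ℝ≥0) : ℝ) : EReal)}
        = 1) :
    ∀ (W : Type) [MeasurableSpace W] (Pr : ProbabilityMeasure W) (B : Set W),
      MeasurableSet B → 0 < Pr B → U W {Pr} B ⊆ {condPM Pr B} :=
  stmt11_general U h1 h2 hsup
end
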